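/- arXiv:2112.13233 — 2 statements merged into one kernel-verified Lean document; each statement's English description precedes it below -/
import Mathlib

section
/- Let (X,f) be a densely aperiodic topological dynamical system and B a basic set. Then int B ∩ M = ∅ for every minimal set M. -/
open Set

/-- The full orbit `{fⁿ(x) : n ∈ ℤ}` of a point under a homeomorphism. -/
def orbitZ {X : Type*} [TopologicalSpace X] (f : X ≃ₜ X) (x : X) : Set X :=
  {y | ∃ n : ℤ, (f.toEquiv ^ n) x = y}

/-- `O(A) = ⋃_{n ∈ ℤ} fⁿ(A)`. -/
def orbitSetZ {X : Type*} [TopologicalSpace X] (f : X ≃ₜ X) (A : Set X) : Set X :=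
  ⋃ n : ℤ, (f.toEquiv ^ n) '' A

/-- `O⁺(A) = ⋃_{n ≥ 0} fⁿ(A)`. -/
def orbitSetP {X : Type*} [TopologicalSpace X] (f : X ≃ₜ X) (A : Set X) : Set X :=
  ⋃ n : ℕ, (f.toEquiv ^ (n : ℤ)) '' A

/-- `O⁻(A) = ⋃_{n ≤ 0} fⁿ(A)`. -/
def orbitSetN {X : Type*} [TopologicalSpace X] (f : X ≃ₜ X) (A : Set X) : Set X :=
  ⋃ n : ℕ, (f.toEquiv ^ (-(n : ℤ))) '' A

/-- The ω-limit set of a point. -/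
def omegaSet {X : Type*} [TopologicalSpace X] (f : X ≃ₜ X) (x : X) : Set X :=
  ⋂ n : ℕ, closure {y | ∃ m : ℕ, n ≤ m ∧ (f.toEquiv ^ (m : ℤ)) x = y}

/-- The α-limit set of a point. -/
def alphaSet {X : Type*} [TopologicalSpace X] (f : X ≃ₜ X) (x : X) : Set X :=
  ⋂ n : ℕ, closure {y | ∃ m : ℕ, n ≤ m ∧ (f.toEquiv ^ (-(m : ℤ))) x = y}

/-- A minimal set: nonempty, closed, invariant, and every orbit in it is dense in it. -/
def IsMinimalSet {X : Type*} [TopologicalSpace X] (f : X ≃ₜ X) (M : Set X) : Prop :=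
  M.Nonempty ∧ IsClosed M ∧ f '' M = M ∧ ∀ x ∈ M, M ⊆ closure (orbitZ f x)

/-- `M_f`: the closure of the union of all minimal sets. -/
def minimalUnion {X : Type*} [TopologicalSpace X] (f : X ≃ₜ X) : Set X :=
  closure (⋃₀ {M | IsMinimalSet f M})

/-- A wandering point. -/
def IsWandering {X : Type*} [TopologicalSpace X] (f : X ≃ₜ X) (x : X) : Prop :=
  ∃ U : Set X, IsOpen U ∧ x ∈ U ∧ ∀ n : ℤ, n ≠ 0 → (f.toEquiv ^ n) '' U ∩ U = ∅

/-- `Ω_f`: the set of non-wandering points. -/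
def nonWandering {X : Type*} [TopologicalSpace X] (f : X ≃ₜ X) : Set X :=
  {x | ¬ IsWandering f x}

/-- A quasi-section: a closed set every open neighborhood of which has full orbit. -/
def IsQuasiSection {X : Type*} [TopologicalSpace X] (f : X ≃ₜ X) (A : Set X) : Prop :=
  IsClosed A ∧ ∀ U : Set X, IsOpen U → A ⊆ U → orbitSetZ f U = Set.univ

/-- A minimal quasi-section (minimal w.r.t. inclusion among quasi-sections). -/
def IsMinimalQuasiSection {X : Type*} [TopologicalSpace X] (f : X ≃ₜ X) (A : Set X) : Prop :=
  IsQuasiSection f A ∧ ∀ B : Set X, IsQuasiSection f B → B ⊆ A → B = A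

/-- A basic set: a quasi-section meeting every orbit in at most one point. -/
def IsBasicSet {X : Type*} [TopologicalSpace X] (f : X ≃ₜ X) (A : Set X) : Prop :=
  IsQuasiSection f A ∧ ∀ x : X, (orbitZ f x ∩ A).Subsingleton

/-- A minimal basic set (minimal w.r.t. inclusion among basic sets). -/
def IsMinimalBasicSet {X : Type*} [TopologicalSpace X] (f : X ≃ₜ X) (A : Set X) : Prop :=
  IsBasicSet f A ∧ ∀ B : Set X, IsBasicSet f B → B ⊆ A → B = A

/-- Densely aperiodic: the points with infinite orbit are dense. -/
def DenselyAperiodic {X : Type*} [TopologicalSpace X] (f : X ≃ₜ X) : Prop :=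
  Dense {x : X | (orbitZ f x).Infinite}

/-! Suppose `x ∈ int B ∩ M`. The orbit of `x` meets `B` only at `x` and is dense in `M`, so `int B`
isolates `x` in `M`. Every orbit in `M` then enters `int B`, and by compactness finitely many
translates of `int B` cover `M`, each meeting `M` in a single point: `M` is finite and `x` is periodic,
say `fⁿ x = x`. An aperiodic point `y` close to `x` then has `y, fⁿ y ∈ B`, two distinct points
of one orbit in `B`. -/

theorem Equiv.Perm.zpow_add_apply {α : Type*} (σ : Equiv.Perm α) (j k : ℤ) (x : α) :
    (σ ^ (j + k)) x = (σ ^ j) ((σ ^ k) x) := by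
  rw [zpow_add, Equiv.Perm.mul_apply]

namespace Homeomorph

variable {X : Type*} [TopologicalSpace X]

theorem toEquiv_zpow (f : X ≃ₜ X) (n : ℤ) : (f ^ n).toEquiv = f.toEquiv ^ n :=
  map_zpow (⟨⟨toEquiv, rfl⟩, fun _ _ => rfl⟩ : (X ≃ₜ X) →* Equiv.Perm X) f n

theorem continuous_toEquiv_zpow (f : X ≃ₜ X) (n : ℤ) : Continuous ⇑(f.toEquiv ^ n) := by
  rw [← toEquiv_zpow]
  exact (f ^ n).continuous

end Homeomorph

section Orbits

variable {X : Type*} [TopologicalSpace X] {f : X ≃ₜ X}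

theorem orbitZ_finite_of_zpow_apply_eq {x : X} {n : ℤ} (hn : n ≠ 0)
    (hx : (f.toEquiv ^ n) x = x) : (orbitZ f x).Finite := by
  refine ((Set.finite_Ico 0 |n|).image fun k => (f.toEquiv ^ k) x).subset ?_
  rintro _ ⟨m, rfl⟩
  refine ⟨m % n, ⟨Int.emod_nonneg m hn, Int.emod_lt_abs m hn⟩, ?_⟩
  have hperiod : (f.toEquiv ^ (n * (m / n))) x = x := by
    rw [zpow_mul]
    exact Equiv.Perm.zpow_apply_eq_self_of_apply_eq_self hx _
  conv_rhs => rw [← Int.emod_add_mul_ediv m n, Equiv.Perm.zpow_add_apply, hperiod]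

theorem exists_zpow_apply_eq_of_orbitZ_finite {x : X} (hx : (orbitZ f x).Finite) :
    ∃ n : ℤ, n ≠ 0 ∧ (f.toEquiv ^ n) x = x := by
  obtain ⟨a, b, hab, heq⟩ :=
    hx.exists_lt_map_eq_of_forall_mem (f := fun k : ℤ => (f.toEquiv ^ k) x) (t := orbitZ f x)
      fun k => ⟨k, rfl⟩
  refine ⟨b - a, by omega, ?_⟩
  rw [sub_eq_neg_add, Equiv.Perm.zpow_add_apply, ← heq, ← Equiv.Perm.zpow_add_apply,
    neg_add_cancel, zpow_zero, Equiv.Perm.one_apply]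

theorem zpow_apply_mem_of_image_eq {M : Set X} (hM : f '' M = M) {z : X} (hz : z ∈ M) (k : ℤ) :
    (f.toEquiv ^ k) z ∈ M := by
  induction k using Int.induction_on generalizing z with
  | zero => simpa using hz
  | succ i ih =>
    rw [zpow_add_one, Equiv.Perm.mul_apply]
    exact ih (hM ▸ mem_image_of_mem f hz)
  | pred i ih =>
    rw [zpow_sub_one, Equiv.Perm.mul_apply]
    rw [← hM] at hz
    obtain ⟨w, hw, rfl⟩ := hz
    simpa using ih hw

theorem orbitZ_subset_of_image_eq {M : Set X} (hM : f '' M = M) {x : X} (hx : x ∈ M) :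
    orbitZ f x ⊆ M := by
  rintro _ ⟨k, rfl⟩
  exact zpow_apply_mem_of_image_eq hM hx k

end Orbits

namespace IsMinimalSet

variable {X : Type*} [TopologicalSpace X] {f : X ≃ₜ X} {M : Set X}

theorem finite_of_inter_eq_singleton [CompactSpace X] (hM : IsMinimalSet f M) {U : Set X}
    (hU : IsOpen U) {x : X} (hUM : U ∩ M = {x}) : M.Finite := by
  obtain ⟨-, hMcl, hMinv, hMdense⟩ := hM
  have hxU : x ∈ U ∩ M := hUM ▸ rfl
  have hcover : M ⊆ ⋃ k : ℤ, ⇑(f.toEquiv ^ k) ⁻¹' U := by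
    intro z hz
    obtain ⟨_, hwU, k, rfl⟩ := mem_closure_iff.mp (hMdense z hz hxU.2) U hU hxU.1
    exact mem_iUnion.mpr ⟨k, hwU⟩
  obtain ⟨t, ht⟩ := hMcl.isCompact.elim_finite_subcover _
    (fun k => hU.preimage (f.continuous_toEquiv_zpow k)) hcover
  refine (t.finite_toSet.image fun k => (f.toEquiv ^ (-k)) x).subset fun z hz => ?_
  obtain ⟨k, hk, hzU⟩ := mem_iUnion₂.mp (ht hz)
  have hkz : (f.toEquiv ^ k) z = x :=
    hUM.subset ⟨hzU, zpow_apply_mem_of_image_eq hMinv hz k⟩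
  exact ⟨k, hk, by
    simp only [← hkz, ← Equiv.Perm.zpow_add_apply, neg_add_cancel, zpow_zero, Equiv.Perm.one_apply]⟩

theorem interior_inter_eq_singleton [T1Space X] (hM : IsMinimalSet f M) {B : Set X} {x : X}
    (hB : (orbitZ f x ∩ B).Subsingleton) (hx : x ∈ interior B ∩ M) :
    interior B ∩ M = {x} := by
  refine subset_antisymm (fun z ⟨hzB, hzM⟩ => ?_) (singleton_subset_iff.mpr hx)
  by_contra hzx
  obtain ⟨w, ⟨hwx, hwB⟩, hw⟩ := mem_closure_iff.mp (hM.2.2.2 x hx.2 hzM) _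
    (isOpen_compl_singleton.inter isOpen_interior) ⟨hzx, hzB⟩
  exact hwx (hB ⟨hw, interior_subset hwB⟩ ⟨⟨0, rfl⟩, interior_subset hx.1⟩)

end IsMinimalSet

theorem DenselyAperiodic.notMem_interior_of_zpow_apply_eq {X : Type*} [TopologicalSpace X]
    {f : X ≃ₜ X} (hf : DenselyAperiodic f) {B : Set X}
    (hB : ∀ y : X, (orbitZ f y ∩ B).Subsingleton) {x : X} {n : ℤ} (hn : n ≠ 0)
    (hx : (f.toEquiv ^ n) x = x) : x ∉ interior B := by
  intro hxB
  have hW : IsOpen (interior B ∩ ⇑(f.toEquiv ^ n) ⁻¹' interior B) :=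
    isOpen_interior.inter (isOpen_interior.preimage (f.continuous_toEquiv_zpow n))
  obtain ⟨y, hy, hyB, hnyB⟩ := hf.exists_mem_open hW ⟨x, hxB, by rwa [mem_preimage, hx]⟩
  have hny : (f.toEquiv ^ n) y = y :=
    hB y ⟨⟨n, rfl⟩, interior_subset hnyB⟩ ⟨⟨0, rfl⟩, interior_subset hyB⟩
  exact hy (orbitZ_finite_of_zpow_apply_eq hn hny)

theorem stmt11_general {X : Type*} [TopologicalSpace X] [CompactSpace X] [T2Space X] (f : X ≃ₜ X)
    (hf : DenselyAperiodic f)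
    (B : Set X) (hB : IsBasicSet f B) :
    ∀ M : Set X, IsMinimalSet f M → interior B ∩ M = ∅ := by
  intro M hM
  refine eq_empty_iff_forall_notMem.mpr fun x hx => ?_
  have hisolated := hM.interior_inter_eq_singleton (hB.2 x) hx
  have hMfin := hM.finite_of_inter_eq_singleton isOpen_interior hisolated
  obtain ⟨n, hn, hnx⟩ :=
    exists_zpow_apply_eq_of_orbitZ_finite (hMfin.subset (orbitZ_subset_of_image_eq hM.2.2.1 hx.2))
  exact hf.notMem_interior_of_zpow_apply_eq hB.2 hn hnx hx.1

theorem stmt11 {X : Type*} [TopologicalSpace X] [CompactSpace X] [T2Space X] [Nonempty X] (f : X ≃ₜ X)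
    (hf : DenselyAperiodic f)
    (B : Set X) (hB : IsBasicSet f B) :
    ∀ M : Set X, IsMinimalSet f M → interior B ∩ M = ∅ :=
  stmt11_general f hf B hB
end

section
/- Let X be a nonempty compact subset of ℝ, f : X → X a homeomorphism, and B := { inf O(x) : x ∈ X } the extremal basic set. Then for every minimal set M, the intersection B ∩ M consists of exactly one point. -/
/-!
The point of `B ∩ M` is `p = min M`. It lies in `B` because its orbit stays in `M`, so
`inf O(p) = p`. Conversely, if `x = inf O(y)` lies in `M`, then `x` lies in the closed invariant
set `closure O(y)`, so by minimality `M ⊆ closure O(y)`; every point of `closure O(y)` is `≥ x`,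
hence `x ≤ p ≤ x`.
-/

open Set

namespace Homeomorph

variable {X : Type*} [TopologicalSpace X]

def toPermHom : (X ≃ₜ X) →* Equiv.Perm X where
  toFun := Homeomorph.toEquiv
  map_one' := rfl
  map_mul' _ _ := rfl

end Homeomorph

open Pointwise in
theorem Equiv.Perm.image_zpow_eq {α : Type*} {g : Equiv.Perm α} {s : Set α} (h : g '' s = s)
    (n : ℤ) : ⇑(g ^ n) '' s = s := by
  have hg : g ∈ MulAction.stabilizer (Equiv.Perm α) s := by
    rwa [MulAction.mem_stabilizer_iff, ← Set.image_smul]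
  have := Subgroup.zpow_mem _ hg n
  rwa [MulAction.mem_stabilizer_iff, ← Set.image_smul] at this

theorem csInf_le_of_mem_closure {α : Type*} [ConditionallyCompleteLinearOrder α]
    [TopologicalSpace α] [OrderClosedTopology α] {s : Set α} {a : α} (hs : BddBelow s)
    (ha : a ∈ closure s) : sInf s ≤ a := by
  have hlb : sInf s ∈ lowerBounds s := fun _ hx => csInf_le hs hx
  exact (lowerBounds_closure s ▸ hlb) ha

section Orbit

variable {X : Type*} [TopologicalSpace X] {f : X ≃ₜ X}

theorem mem_orbitZ_self (f : X ≃ₜ X) (x : X) : x ∈ orbitZ f x := ⟨0, rfl⟩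

theorem mapsTo_zpow_orbitZ (f : X ≃ₜ X) (y : X) (n : ℤ) :
    MapsTo ⇑(f.toEquiv ^ n) (orbitZ f y) (orbitZ f y) := by
  rintro _ ⟨m, rfl⟩
  exact ⟨n + m, by rw [zpow_add, Equiv.Perm.mul_apply]⟩

theorem mapsTo_zpow_closure_orbitZ (f : X ≃ₜ X) (y : X) (n : ℤ) :
    MapsTo ⇑(f.toEquiv ^ n) (closure (orbitZ f y)) (closure (orbitZ f y)) :=
  (mapsTo_zpow_orbitZ f y n).closure (f.continuous_toEquiv_zpow n)

theorem orbitZ_subset_of_mapsTo {S : Set X} (hS : ∀ n : ℤ, MapsTo ⇑(f.toEquiv ^ n) S S)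
    {x : X} (hx : x ∈ S) : orbitZ f x ⊆ S := by
  rintro _ ⟨n, rfl⟩
  exact hS n hx

namespace IsMinimalSet

variable {M : Set X}

theorem orbitZ_subset (hM : IsMinimalSet f M) {x : X} (hx : x ∈ M) : orbitZ f x ⊆ M :=
  orbitZ_subset_of_mapsTo
    (fun n => mapsTo_iff_image_subset.2 (Equiv.Perm.image_zpow_eq hM.2.2.1 n).subset) hx

theorem subset_closure_orbitZ (hM : IsMinimalSet f M) {x y : X} (hx : x ∈ M)
    (hxy : x ∈ closure (orbitZ f y)) : M ⊆ closure (orbitZ f y) :=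
  (hM.2.2.2 x hx).trans <|
    closure_minimal (orbitZ_subset_of_mapsTo (mapsTo_zpow_closure_orbitZ f y) hxy) isClosed_closure

end IsMinimalSet

end Orbit

theorem stmt17_general (X : Set ℝ) (hX : IsCompact X)
    (f : X ≃ₜ X)
    (M : Set X) (hM : IsMinimalSet f M) :
    ∃ p : X, {x : X | ∃ y : X, (x : ℝ) = sInf ((↑) '' orbitZ f y)} ∩ M = {p} := by
  have hbdd (S : Set X) : BddBelow (((↑) : X → ℝ) '' S) :=
    hX.bddBelow.mono (image_subset_iff.2 fun z _ => z.2)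
  have : CompactSpace X := isCompact_iff_compactSpace.mp hX
  obtain ⟨p, hpM, hp⟩ :=
    (hM.2.1.isCompact.image continuous_subtype_val).sInf_mem (hM.1.image ((↑) : X → ℝ))
  have hp_le {x : X} (hx : x ∈ M) : p ≤ x := by
    change (p : ℝ) ≤ x
    exact hp ▸ csInf_le (hbdd M) (mem_image_of_mem _ hx)
  refine ⟨p, eq_singleton_iff_unique_mem.2 ⟨⟨⟨p, ?_⟩, hpM⟩, ?_⟩⟩
  · refine (IsLeast.csInf_eq ⟨mem_image_of_mem _ (mem_orbitZ_self f p), ?_⟩).symm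
    rintro _ ⟨z, hz, rfl⟩
    exact hp_le (hM.orbitZ_subset hpM hz)
  · rintro x ⟨⟨y, hxy⟩, hxM⟩
    have hx_cl : x ∈ closure (orbitZ f y) := closure_subtype.2 <|
      hxy ▸ csInf_mem_closure ⟨_, mem_image_of_mem _ (mem_orbitZ_self f y)⟩ (hbdd _)
    have hp_cl := closure_subtype.1 (hM.subset_closure_orbitZ hxM hx_cl hpM)
    have hx_le : (x : ℝ) ≤ p := hxy ▸ csInf_le_of_mem_closure (hbdd _) hp_cl
    exact le_antisymm hx_le (hp_le hxM)

theorem stmt17 (X : Set ℝ) (hne : X.Nonempty) (hX : IsCompact X)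
    (f : X ≃ₜ X)
    (M : Set X) (hM : IsMinimalSet f M) :
    ∃ p : X, {x : X | ∃ y : X, (x : ℝ) = sInf ((↑) '' orbitZ f y)} ∩ M = {p} :=
  stmt17_general X hX f M hM
end
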